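/- Let J:ℕ_{≥1}→ℝ_{>0} be nonincreasing, and for n ≥ 1 set D_n(J) = ∑_{x=−(2^n−1)}^{−2^{n−1}} ∑_{y=2^{n−1}}^{2^n−1} J(y−x) and D(J) = inf_{n≥1} D_n(J). Let M > 1 and 1 < a < 2, and let γ be an (M,a)-irreducible contour. Then H_J(γ) ≥ 2·min{J(1), D(J)} · 𝒩'(γ). -/

import Mathlib

noncomputable section
open scoped Classical ENNReal

/-! An integer `k : ℤ` encodes the dual-lattice site (spin flip) `k + 1/2 ∈ ℤ + 1/2`. -/

/-- Auxiliary greedy construction of the canonical cover (with fuel). -/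
def coverAux (n : ℕ) : ℕ → Finset ℤ → Finset ℤ
  | 0, _ => ∅
  | fuel + 1, γ =>
    if h : γ.Nonempty then
      insert (γ.min' h) (coverAux n fuel (γ.filter fun x => γ.min' h + 2 ^ n ≤ x))
    else ∅

/-- The left endpoints of the intervals of the canonical greedy cover `𝒾ₙ(γ)` of `γ` by
open intervals of diameter `2^n` with integer endpoints: `u` encodes `(u, u + 2^n)`. -/
def cover (n : ℕ) (γ : Finset ℤ) : Finset ℤ := coverAux n γ.card γ

/-- The diameter of `γ` (as a subset of `ℤ + 1/2`). -/
def diamZ (γ : Finset ℤ) : ℤ := WithBot.unbotD 0 γ.max - WithTop.untopD 0 γ.min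

/-- `n₀(γ) = ⌊log₂ diam γ⌋`. -/
def n0 (γ : Finset ℤ) : ℕ := Nat.log 2 (diamZ γ).toNat

/-- The isolated intervals `𝒾'ₙ(γ)`. -/
def isoCover (M a : ℝ) (n : ℕ) (γ : Finset ℤ) : Finset ℤ :=
  (cover n γ).filter fun u => ∀ u' ∈ cover n γ, u' ≠ u →
    2 * M * (2 : ℝ) ^ (a * n) ≤ |(u : ℝ) - (u' : ℝ)| - 2 ^ n

/-- The isolated cover size `𝒩'(γ) = |γ| + ∑_{n=1}^{n₀(γ)} |𝒾'ₙ(γ)|`. -/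
def isoCoverSize (M a : ℝ) (γ : Finset ℤ) : ℕ :=
  γ.card + ∑ n ∈ Finset.Icc 1 (n0 γ), (isoCover M a n γ).card

/-- The minus-interior `I₋(γ)`: the integers `x` such that the number of spin flips of
`γ` to the right of `x` is odd. -/
def Iminus (γ : Finset ℤ) : Finset ℤ :=
  (Finset.Icc (WithTop.untopD 0 γ.min) (WithBot.unbotD 0 γ.max)).filter fun x =>
    Odd (γ.filter fun k => x ≤ k).card

/-- The energy `H_J(γ) = 2∑_{x ∈ I₋(γ)} ∑_{y ∉ I₋(γ)} J(|x−y|)`, valued in `ℝ≥0∞`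
(for a general coupling the inner series need not converge). -/
def energyE (J : ℕ → ℝ) (γ : Finset ℤ) : ℝ≥0∞ :=
  2 * ∑ x ∈ Iminus γ, ∑' y : ℤ,
      if y ∈ Iminus γ then 0 else ENNReal.ofReal (J (x - y).natAbs)

/-- `D_n(J) = ∑_{x ∈ I_n^-} ∑_{y ∈ I_n^+} J(y−x)` with `I_n^+ = [2^{n−1}, 2^n−1]` and
`I_n^- = −I_n^+` (meaningful for `n ≥ 1`). -/
def Dn (J : ℕ → ℝ) (n : ℕ) : ℝ :=
  ∑ x ∈ Finset.Icc (-(2 ^ n - 1) : ℤ) (-(2 ^ (n - 1)) : ℤ),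
    ∑ y ∈ Finset.Icc ((2 : ℤ) ^ (n - 1)) ((2 : ℤ) ^ n - 1), J (y - x).natAbs

/-- `D(J) = inf_{n ≥ 1} D_n(J)`. -/
def DJ (J : ℕ → ℝ) : ℝ := ⨅ n : ℕ, Dn J (n + 1)

/-- `γ` is an `(M,a)`-irreducible contour. -/
def IsContour (M a : ℝ) (γ : Finset ℤ) : Prop :=
  γ.Nonempty ∧ Even γ.card ∧
    ¬∃ P : Finset (Finset ℤ), 2 ≤ P.card ∧ (∀ g ∈ P, g.Nonempty ∧ Even g.card) ∧
      (P : Set (Finset ℤ)).PairwiseDisjoint id ∧ P.sup id = γ ∧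
      ∀ g ∈ P, ∀ g' ∈ P, g ≠ g' → ∀ x ∈ g, ∀ y ∈ g',
        M * ((min (diamZ g) (diamZ g') : ℤ) : ℝ) ^ a < |(x : ℝ) - (y : ℝ)|

/-! Each spin flip `k` gives the bond `{k, k + 1}` across the boundary of `I₋(γ)`, of energy
`J 1`. An isolated interval `[u, u + 2ⁿ)` of the cover holds an odd number of flips (otherwise
it would split off from the contour) and no other flip lies within `2ⁿ⁺¹` of it, so its
neighbourhoods `(u - 2ⁿ⁻¹, u]` and `[u + 2ⁿ, u + 2ⁿ + 2ⁿ⁻¹)` lie on opposite sides of the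
boundary; the bonds between them are a translate of those defining `D_n(J)`. Bond lengths
(`1`, resp. in `[2ⁿ, 2ⁿ⁺¹)`) and the separation of isolated intervals make all these bond sets
disjoint, and `H_J(γ)` is twice the total energy of the bonds leaving `I₋(γ)`. -/

open Finset

theorem Finset.sum_le_sum_tsum_of_fst_mem {α β : Type*} {s : Finset α} {T : Finset (α × β)}
    (hT : ∀ p ∈ T, p.1 ∈ s) (f : α × β → ℝ≥0∞) :
    ∑ p ∈ T, f p ≤ ∑ x ∈ s, ∑' y, f (x, y) :=
  calc ∑ p ∈ T, f p ≤ ∑ p ∈ s ×ˢ T.image Prod.snd, f p :=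
        sum_le_sum_of_subset fun p hp => mem_product.2 ⟨hT p hp, mem_image_of_mem _ hp⟩
    _ = ∑ x ∈ s, ∑ y ∈ T.image Prod.snd, f (x, y) := sum_product _ _ _
    _ ≤ ∑ x ∈ s, ∑' y, f (x, y) := sum_le_sum fun _ _ => ENNReal.sum_le_tsum _

def bondEnergy (J : ℕ → ℝ) (p : ℤ × ℤ) : ℝ≥0∞ := ENNReal.ofReal (J (p.1 - p.2).natAbs)

theorem two_mul_sum_bondEnergy_le_energyE (J : ℕ → ℝ) {γ : Finset ℤ} {T : Finset (ℤ × ℤ)}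
    (hT : ∀ p ∈ T, p.1 ∈ Iminus γ ∧ p.2 ∉ Iminus γ) :
    2 * ∑ p ∈ T, bondEnergy J p ≤ energyE J γ := by
  unfold energyE
  gcongr
  calc ∑ p ∈ T, bondEnergy J p
      = ∑ p ∈ T, if p.2 ∈ Iminus γ then 0 else bondEnergy J p :=
        sum_congr rfl fun p hp => (if_neg (hT p hp).2).symm
    _ ≤ _ := sum_le_sum_tsum_of_fst_mem (fun p hp => (hT p hp).1) _

theorem mem_Iminus_iff {γ : Finset ℤ} (hγ : Even #γ) {x : ℤ} :
    x ∈ Iminus γ ↔ Odd #(γ.filter (x ≤ ·)) := by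
  refine ⟨fun h => (mem_filter.1 h).2, fun h => mem_filter.2 ⟨mem_Icc.2 ⟨?_, ?_⟩, h⟩⟩
  all_goals obtain ⟨k, hk⟩ : (γ.filter (x ≤ ·)).Nonempty := card_pos.1 h.pos
  all_goals have hne : γ.Nonempty := ⟨k, (mem_filter.1 hk).1⟩
  · rw [← coe_min' hne, WithTop.untopD_coe]
    by_contra! hx
    rw [filter_true_of_mem fun k hk => hx.le.trans (min'_le γ k hk)] at h
    exact Nat.not_odd_iff_even.2 hγ h
  · rw [← coe_max' hne, WithBot.unbotD_coe]
    exact (mem_filter.1 hk).2.trans (le_max' γ k (mem_filter.1 hk).1)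

theorem card_filter_le_eq_add (γ : Finset ℤ) {x y : ℤ} (hxy : x ≤ y) :
    #(γ.filter (x ≤ ·)) = #(γ.filter (y ≤ ·)) + #(γ ∩ Ico x y) := by
  rw [← card_union_of_disjoint]
  · congr 1
    ext k
    simp only [mem_filter, mem_union, mem_inter, mem_Ico, ← and_or_left]
    exact and_congr_right fun _ => by omega
  · rw [disjoint_left]
    intro k hk hk'
    simp only [mem_filter, mem_inter, mem_Ico] at hk hk'
    omega

theorem mem_Iminus_iff_not_mem_of_odd {γ : Finset ℤ} (hγ : Even #γ) {x y : ℤ} (hxy : x ≤ y)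
    (hodd : Odd #(γ ∩ Ico x y)) : x ∈ Iminus γ ↔ y ∉ Iminus γ := by
  rw [mem_Iminus_iff hγ, mem_Iminus_iff hγ, card_filter_le_eq_add γ hxy, Nat.odd_add,
    ← Nat.not_odd_iff_even]
  tauto

/-- The pairs of `A ×ˢ B ∪ B ×ˢ A` oriented from `I₋(γ)` outwards, when `A ∋ u` lies on the
opposite side of `∂I₋(γ)` from `B`. -/
def orientedPairs (γ : Finset ℤ) (u : ℤ) (A B : Finset ℤ) : Finset (ℤ × ℤ) :=
  if u ∈ Iminus γ then A ×ˢ B else B ×ˢ A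

theorem mem_orientedPairs {γ : Finset ℤ} {u : ℤ} {A B : Finset ℤ} {p : ℤ × ℤ}
    (hp : p ∈ orientedPairs γ u A B) : p.1 ∈ A ∧ p.2 ∈ B ∨ p.1 ∈ B ∧ p.2 ∈ A := by
  unfold orientedPairs at hp
  split_ifs at hp <;> simp only [mem_product] at hp <;> tauto

theorem mem_Iminus_of_mem_orientedPairs {γ : Finset ℤ} {u : ℤ} {A B : Finset ℤ} (hu : u ∈ A)
    (hAB : ∀ x ∈ A, ∀ y ∈ B, (x ∈ Iminus γ ↔ y ∉ Iminus γ)) {p : ℤ × ℤ}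
    (hp : p ∈ orientedPairs γ u A B) : p.1 ∈ Iminus γ ∧ p.2 ∉ Iminus γ := by
  unfold orientedPairs at hp
  split_ifs at hp with hu'
  · obtain ⟨hx, hy⟩ := mem_product.1 hp
    have := hAB u hu p.2 hy
    have := hAB p.1 hx p.2 hy
    tauto
  · obtain ⟨hy, hx⟩ := mem_product.1 hp
    have := hAB u hu p.1 hy
    have := hAB p.2 hx p.1 hy
    tauto

theorem sum_orientedPairs (J : ℕ → ℝ) (γ : Finset ℤ) (u : ℤ) (A B : Finset ℤ) :
    ∑ p ∈ orientedPairs γ u A B, bondEnergy J p = ∑ p ∈ A ×ˢ B, bondEnergy J p := by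
  unfold orientedPairs
  split_ifs
  · rfl
  · rw [sum_product, sum_product, sum_comm]
    refine sum_congr rfl fun x _ => sum_congr rfl fun y _ => ?_
    rw [bondEnergy, bondEnergy, ← Int.natAbs_neg, neg_sub]

theorem coverAux_subset (n fuel : ℕ) (γ : Finset ℤ) : coverAux n fuel γ ⊆ γ := by
  induction fuel generalizing γ with
  | zero => simp [coverAux]
  | succ fuel ih =>
    rw [coverAux]
    split_ifs with h
    · exact insert_subset (min'_mem γ h) ((ih _).trans (filter_subset _ _))
    · exact empty_subset _

theorem exists_mem_coverAux (n : ℕ) {fuel : ℕ} {γ : Finset ℤ} (hfuel : #γ ≤ fuel) {k : ℤ}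
    (hk : k ∈ γ) : ∃ u ∈ coverAux n fuel γ, k ∈ Ico u (u + 2 ^ n) := by
  induction fuel generalizing γ with
  | zero => simp_all
  | succ fuel ih =>
    have h : γ.Nonempty := ⟨k, hk⟩
    rw [coverAux, dif_pos h]
    by_cases hku : k < γ.min' h + 2 ^ n
    · exact ⟨_, mem_insert_self _ _, mem_Ico.2 ⟨min'_le γ k hk, hku⟩⟩
    have hrest : #(γ.filter fun x => γ.min' h + 2 ^ n ≤ x) ≤ fuel := by
      have : γ.filter (fun x => γ.min' h + 2 ^ n ≤ x) ⊂ γ :=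
        filter_ssubset.2
          ⟨γ.min' h, min'_mem γ h, not_le.2 (lt_add_of_pos_right _ (by positivity))⟩
      have := card_lt_card this
      omega
    obtain ⟨u, hu, hku'⟩ := ih hrest (mem_filter.2 ⟨hk, not_lt.1 hku⟩)
    exact ⟨u, mem_insert_of_mem hu, hku'⟩

theorem cover_subset (n : ℕ) (γ : Finset ℤ) : cover n γ ⊆ γ := coverAux_subset n _ γ

theorem exists_mem_cover (n : ℕ) {γ : Finset ℤ} {k : ℤ} (hk : k ∈ γ) :
    ∃ u ∈ cover n γ, k ∈ Ico u (u + 2 ^ n) :=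
  exists_mem_coverAux n le_rfl hk

theorem mem_of_mem_isoCover {M a : ℝ} {n : ℕ} {γ : Finset ℤ} {u : ℤ}
    (hu : u ∈ isoCover M a n γ) : u ∈ γ :=
  cover_subset n γ (mem_filter.1 hu).1

theorem abs_sub_le_of_mem_Ico {n : ℕ} {u x : ℤ} (hx : x ∈ Ico u (u + 2 ^ n)) :
    |(x : ℝ) - u| ≤ 2 ^ n - 1 := by
  obtain ⟨h₁, h₂⟩ := mem_Ico.1 hx
  have h₁' : (u : ℝ) ≤ x := by exact_mod_cast h₁
  have h₂' : (x : ℝ) + 1 ≤ u + 2 ^ n := by exact_mod_cast h₂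
  rw [abs_sub_le_iff]
  constructor <;> linarith

theorem two_pow_le_two_rpow_mul {a : ℝ} (ha : 1 ≤ a) (n : ℕ) : (2 : ℝ) ^ n ≤ 2 ^ (a * n) := by
  rw [← Real.rpow_natCast]
  exact Real.rpow_le_rpow_of_exponent_le one_le_two (le_mul_of_one_le_left n.cast_nonneg ha)

/-- The flip's own interval of the cover is far from the isolated interval `[u, u + 2ⁿ)`. -/
theorem add_one_le_abs_sub_of_mem_isoCover {M a : ℝ} {n : ℕ} {γ : Finset ℤ} {u k : ℤ}
    (hu : u ∈ isoCover M a n γ) (hk : k ∈ γ) (hku : k ∉ Ico u (u + 2 ^ n)) :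
    2 * M * (2 : ℝ) ^ (a * n) + 1 ≤ |(u : ℝ) - k| := by
  obtain ⟨u', hu', hku'⟩ := exists_mem_cover n hk
  have hne : u' ≠ u := by rintro rfl; exact hku hku'
  have hiso := (mem_filter.1 hu).2 u' hu' hne
  linarith [abs_sub_le (u : ℝ) k u', abs_sub_le_of_mem_Ico hku']

theorem two_pow_succ_lt_abs_sub_of_mem_isoCover {M a : ℝ} (hM : 1 ≤ M) (ha : 1 ≤ a) {n : ℕ}
    {γ : Finset ℤ} {u k : ℤ} (hu : u ∈ isoCover M a n γ) (hk : k ∈ γ)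
    (hku : k ∉ Ico u (u + 2 ^ n)) : 2 ^ (n + 1) < |u - k| := by
  have h := add_one_le_abs_sub_of_mem_isoCover hu hk hku
  have h2 : (2 : ℝ) ^ n ≤ M * 2 ^ (a * n) :=
    (two_pow_le_two_rpow_mul ha n).trans (le_mul_of_one_le_left (by positivity) hM)
  have : ((2 ^ (n + 1) : ℤ) : ℝ) < ((|u - k| : ℤ) : ℝ) := by
    push_cast
    rw [pow_succ]
    linarith
  exact_mod_cast this

theorem two_pow_succ_lt_sub_of_mem_isoCover {M a : ℝ} (hM : 1 ≤ M) (ha : 1 ≤ a) {n : ℕ}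
    {γ : Finset ℤ} {u u' : ℤ} (hu : u ∈ isoCover M a n γ) (hu' : u' ∈ isoCover M a n γ)
    (hlt : u < u') : 2 ^ (n + 1) < u' - u := by
  have := two_pow_succ_lt_abs_sub_of_mem_isoCover hM ha hu' (mem_of_mem_isoCover hu)
    (fun h => (mem_Ico.1 h).1.not_gt hlt)
  rwa [abs_of_pos (sub_pos.2 hlt)] at this

theorem inter_Ico_eq_of_mem_isoCover {M a : ℝ} (hM : 1 ≤ M) (ha : 1 ≤ a) {n : ℕ}
    {γ : Finset ℤ} {u : ℤ} (hu : u ∈ isoCover M a n γ) {x y : ℤ} (hx : u - 2 ^ (n + 1) ≤ x)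
    (hxu : x ≤ u) (huy : u + 2 ^ n ≤ y) (hy : y ≤ u + 2 ^ (n + 1)) :
    γ ∩ Ico x y = γ ∩ Ico u (u + 2 ^ n) := by
  rw [pow_succ] at hx hy
  ext k
  simp only [mem_inter, mem_Ico, and_congr_right_iff]
  intro hk
  by_cases hku : u ≤ k ∧ k < u + 2 ^ n
  · omega
  · have := two_pow_succ_lt_abs_sub_of_mem_isoCover hM ha hu hk (by rwa [mem_Ico])
    rw [pow_succ] at this
    rcases lt_abs.mp this with h | h <;> omega

theorem diamZ_eq {s : Finset ℤ} (hs : s.Nonempty) : diamZ s = s.max' hs - s.min' hs := by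
  rw [diamZ, ← coe_max' hs, ← coe_min' hs, WithBot.unbotD_coe, WithTop.untopD_coe]

theorem diamZ_nonneg (s : Finset ℤ) : 0 ≤ diamZ s := by
  rcases s.eq_empty_or_nonempty with rfl | hs
  · rfl
  · rw [diamZ_eq hs, sub_nonneg]
    exact min'_le_max' s hs

theorem two_pow_le_diamZ {γ : Finset ℤ} {n : ℕ} (hn : n ≠ 0) (hn0 : n ≤ n0 γ) :
    2 ^ n ≤ diamZ γ := by
  have hd : (diamZ γ).toNat ≠ 0 := fun h => by simp only [n0, h, Nat.log_zero_right] at hn0; omega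
  have : 2 ^ n ≤ (diamZ γ).toNat :=
    (Nat.pow_le_pow_right two_pos hn0).trans (Nat.pow_log_le_self 2 hd)
  rw [← Int.toNat_of_nonneg (diamZ_nonneg γ)]
  exact_mod_cast this

theorem IsContour.odd_card_of_far {M a : ℝ} {γ g : Finset ℤ} (hγ : IsContour M a γ)
    (hgγ : g ⊂ γ) (hg : g.Nonempty)
    (hfar : ∀ x ∈ g, ∀ y ∈ γ \ g,
      M * ((min (diamZ g) (diamZ (γ \ g)) : ℤ) : ℝ) ^ a < |(x : ℝ) - y|) :
    Odd #g := by
  obtain ⟨-, hγev, hirr⟩ := hγ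
  by_contra hodd
  rw [Nat.not_odd_iff_even] at hodd
  have hdisj : Disjoint g (γ \ g) := disjoint_sdiff
  have hne : g ≠ γ \ g := fun h => hg.ne_empty (disjoint_self.1 (by rwa [← h] at hdisj))
  refine hirr ⟨{g, γ \ g}, (card_pair hne).ge, ?_, ?_, ?_, ?_⟩
  · simp only [mem_insert, mem_singleton]
    rintro _ (rfl | rfl)
    · exact ⟨hg, hodd⟩
    · refine ⟨sdiff_nonempty.2 hgγ.2, ?_⟩
      rw [card_sdiff_of_subset hgγ.1, Nat.even_sub (card_le_card hgγ.1)]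
      tauto
  · rw [coe_pair]
    exact Set.pairwise_pair.2 fun _ => ⟨hdisj, hdisj.symm⟩
  · rw [sup_insert, sup_singleton]
    exact union_sdiff_of_subset hgγ.1
  · simp only [mem_insert, mem_singleton]
    rintro _ (rfl | rfl) _ (rfl | rfl) h x hx y hy
    · exact absurd rfl h
    · exact hfar x hx y hy
    · rw [min_comm, abs_sub_comm]
      exact hfar y hy x hx
    · exact absurd rfl h

theorem odd_card_inter_Ico_of_mem_isoCover {M a : ℝ} (hM : 1 ≤ M) (ha : 1 ≤ a)
    {γ : Finset ℤ} (hγ : IsContour M a γ) {n : ℕ} (hn : n ≠ 0) (hn0 : n ≤ n0 γ) {u : ℤ}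
    (hu : u ∈ isoCover M a n γ) : Odd #(γ ∩ Ico u (u + 2 ^ n)) := by
  set g := γ ∩ Ico u (u + 2 ^ n)
  have hug : u ∈ g :=
    mem_inter.2 ⟨mem_of_mem_isoCover hu, mem_Ico.2 ⟨le_rfl, lt_add_of_pos_right _ (by positivity)⟩⟩
  have hdiam : diamZ g < 2 ^ n := by
    rw [diamZ_eq ⟨u, hug⟩]
    have := (mem_Ico.1 (mem_inter.1 (max'_mem g ⟨u, hug⟩)).2).2
    have := (mem_Ico.1 (mem_inter.1 (min'_mem g ⟨u, hug⟩)).2).1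
    omega
  have hgγ : g ⊂ γ := ssubset_of_subset_of_ne inter_subset_left fun h => by
    have := two_pow_le_diamZ (γ := γ) hn hn0
    rw [← h] at this
    omega
  refine hγ.odd_card_of_far hgγ ⟨u, hug⟩ fun x hx y hy => ?_
  obtain ⟨hyγ, hyg⟩ := mem_sdiff.1 hy
  have hmin : ((min (diamZ g) (diamZ (γ \ g)) : ℤ) : ℝ) ^ a ≤ 2 ^ (a * n) :=
    calc ((min (diamZ g) (diamZ (γ \ g)) : ℤ) : ℝ) ^ a ≤ ((2 : ℝ) ^ n) ^ a := by
          apply Real.rpow_le_rpow (by exact_mod_cast le_min (diamZ_nonneg _) (diamZ_nonneg _))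
            (by exact_mod_cast (min_le_left _ _).trans hdiam.le) (by linarith)
      _ = 2 ^ (a * n) := by rw [← Real.rpow_natCast, ← Real.rpow_mul zero_le_two, mul_comm]
  have hyu := add_one_le_abs_sub_of_mem_isoCover hu hyγ fun h => hyg (mem_inter.2 ⟨hyγ, h⟩)
  have hxu := abs_sub_le_of_mem_Ico (mem_inter.1 hx).2
  have h2 := two_pow_le_two_rpow_mul ha n
  have hM2 : (2 : ℝ) ^ (a * n) ≤ M * 2 ^ (a * n) := le_mul_of_one_le_left (by positivity) hM
  calc M * ((min (diamZ g) (diamZ (γ \ g)) : ℤ) : ℝ) ^ a ≤ M * 2 ^ (a * n) :=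
        mul_le_mul_of_nonneg_left hmin (by linarith)
    _ < |(x : ℝ) - y| := by linarith [abs_sub_le (u : ℝ) x y, abs_sub_comm (x : ℝ) u]

def leftBlock (n : ℕ) (u : ℤ) : Finset ℤ := Icc (u - 2 ^ (n - 1) + 1) u

def rightBlock (n : ℕ) (u : ℤ) : Finset ℤ := Icc (u + 2 ^ n) (u + 2 ^ n + 2 ^ (n - 1) - 1)

theorem two_pow_eq_two_mul_two_pow_pred {n : ℕ} (hn : n ≠ 0) : (2 : ℤ) ^ n = 2 * 2 ^ (n - 1) := by
  rw [← pow_succ', Nat.sub_add_cancel (Nat.one_le_iff_ne_zero.2 hn)]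

theorem Dn_eq_sum_leftBlock_rightBlock (J : ℕ → ℝ) {n : ℕ} (hn : n ≠ 0) (u : ℤ) :
    Dn J n = ∑ p ∈ leftBlock n u ×ˢ rightBlock n u, J (p.1 - p.2).natAbs := by
  have h2 := two_pow_eq_two_mul_two_pow_pred hn
  have hL : leftBlock n u = (Icc (-(2 ^ n - 1)) (-2 ^ (n - 1))).map
      (addRightEmbedding (u + 2 ^ (n - 1))) := by
    rw [map_add_right_Icc, leftBlock]
    congr 1 <;> omega
  have hR : rightBlock n u = (Icc (2 ^ (n - 1)) (2 ^ n - 1)).map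
      (addRightEmbedding (u + 2 ^ (n - 1))) := by
    rw [map_add_right_Icc, rightBlock]
    congr 1 <;> omega
  rw [Dn, hL, hR, sum_product, sum_map]
  refine sum_congr rfl fun x _ => ?_
  rw [sum_map]
  refine sum_congr rfl fun y _ => ?_
  rw [addRightEmbedding_apply, addRightEmbedding_apply, ← Int.natAbs_neg]
  congr 2
  ring

theorem DJ_le_Dn {J : ℕ → ℝ} (hJ : ∀ n : ℕ, 1 ≤ n → 0 ≤ J n) {n : ℕ} (hn : n ≠ 0) :
    DJ J ≤ Dn J n := by
  have hDn : ∀ m : ℕ, 0 ≤ Dn J (m + 1) := fun m => by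
    have := pow_pos (two_pos (α := ℤ)) (m + 1 - 1)
    refine sum_nonneg fun x hx => sum_nonneg fun y hy => hJ _ ?_
    rw [mem_Icc] at hx hy
    omega
  obtain ⟨m, rfl⟩ := Nat.exists_eq_succ_of_ne_zero hn
  exact ciInf_le ⟨0, by rintro _ ⟨k, rfl⟩; exact hDn k⟩ m

/-- The bonds counted by one unit of `𝒩'(γ)`: the nearest-neighbour bond through a spin flip
`k`, or the bonds between the two neighbourhoods of an isolated interval `[u, u + 2ⁿ)`. -/
def bondBlock (γ : Finset ℤ) : ℤ ⊕ (Σ _ : ℕ, ℤ) → Finset (ℤ × ℤ)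
  | .inl k => orientedPairs γ k {k} {k + 1}
  | .inr ⟨n, u⟩ => orientedPairs γ u (leftBlock n u) (rightBlock n u)

def bondBlockIndex (M a : ℝ) (γ : Finset ℤ) : Finset (ℤ ⊕ (Σ _ : ℕ, ℤ)) :=
  γ.disjSum ((Icc 1 (n0 γ)).sigma fun n => isoCover M a n γ)

theorem card_bondBlockIndex (M a : ℝ) (γ : Finset ℤ) :
    #(bondBlockIndex M a γ) = isoCoverSize M a γ := by
  rw [bondBlockIndex, card_disjSum, card_sigma, isoCoverSize]

theorem mem_inr_bondBlockIndex {M a : ℝ} {γ : Finset ℤ} {n : ℕ} {u : ℤ} :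
    .inr ⟨n, u⟩ ∈ bondBlockIndex M a γ ↔ (1 ≤ n ∧ n ≤ n0 γ) ∧ u ∈ isoCover M a n γ := by
  rw [bondBlockIndex, inr_mem_disjSum, mem_sigma, mem_Icc]

theorem n_ne_zero_of_mem_bondBlockIndex {M a : ℝ} {γ : Finset ℤ} {n : ℕ} {u : ℤ}
    (h : .inr ⟨n, u⟩ ∈ bondBlockIndex M a γ) : n ≠ 0 :=
  Nat.one_le_iff_ne_zero.1 (mem_inr_bondBlockIndex.1 h).1.1

theorem mem_bondBlock_inl {γ : Finset ℤ} {k : ℤ} {p : ℤ × ℤ} (hp : p ∈ bondBlock γ (.inl k)) :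
    p = (k, k + 1) ∨ p = (k + 1, k) := by
  rcases mem_orientedPairs hp with ⟨h₁, h₂⟩ | ⟨h₁, h₂⟩ <;>
    simp only [mem_singleton] at h₁ h₂ <;> simp [Prod.ext_iff, h₁, h₂]

theorem log_natAbs_of_mem_bondBlock_inr {γ : Finset ℤ} {n : ℕ} (hn : n ≠ 0) {u : ℤ}
    {p : ℤ × ℤ} (hp : p ∈ bondBlock γ (.inr ⟨n, u⟩)) : Nat.log 2 (p.1 - p.2).natAbs = n := by
  have h2 := two_pow_eq_two_mul_two_pow_pred hn
  have h2' : (2 : ℤ) ^ (n + 1) = 2 * 2 ^ n := pow_succ' 2 n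
  have hd : 2 ^ n ≤ |p.1 - p.2| ∧ |p.1 - p.2| < 2 ^ (n + 1) := by
    rw [le_abs, abs_sub_lt_iff]
    rcases mem_orientedPairs hp with ⟨h₁, h₂⟩ | ⟨h₁, h₂⟩ <;>
      simp only [leftBlock, rightBlock, mem_Icc] at h₁ h₂ <;> omega
  apply Nat.log_eq_of_pow_le_of_lt_pow <;> zify <;> omega

theorem mem_Iminus_of_mem_bondBlock {M a : ℝ} (hM : 1 ≤ M) (ha : 1 ≤ a) {γ : Finset ℤ}
    (hγ : IsContour M a γ) {i : ℤ ⊕ (Σ _ : ℕ, ℤ)} (hi : i ∈ bondBlockIndex M a γ)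
    {p : ℤ × ℤ} (hp : p ∈ bondBlock γ i) : p.1 ∈ Iminus γ ∧ p.2 ∉ Iminus γ := by
  rcases i with k | ⟨n, u⟩
  · refine mem_Iminus_of_mem_orientedPairs (mem_singleton_self k) ?_ hp
    intro x hx y hy
    rw [mem_singleton] at hx hy
    rw [hx, hy]
    refine mem_Iminus_iff_not_mem_of_odd hγ.2.1 (by omega) ?_
    have : γ ∩ Ico k (k + 1) = {k} := by
      rw [Ico_add_one_right_eq_Icc, Icc_self, inter_singleton_of_mem (inl_mem_disjSum.1 hi)]
    rw [this, card_singleton]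
    exact odd_one
  · obtain ⟨⟨hn1, hn0⟩, hu⟩ := mem_inr_bondBlockIndex.1 hi
    have h2 := two_pow_eq_two_mul_two_pow_pred (n := n) (by omega)
    have h2' : (2 : ℤ) ^ (n + 1) = 2 * 2 ^ n := pow_succ' 2 n
    have huL : u ∈ leftBlock n u := by
      rw [leftBlock, mem_Icc]
      constructor <;> linarith [pow_pos (two_pos (α := ℤ)) (n - 1)]
    refine mem_Iminus_of_mem_orientedPairs huL ?_ hp
    intro x hx y hy
    simp only [leftBlock, rightBlock, mem_Icc] at hx hy
    refine mem_Iminus_iff_not_mem_of_odd hγ.2.1 (by omega) ?_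
    rw [inter_Ico_eq_of_mem_isoCover hM ha hu (by omega) hx.2 hy.1 (by omega)]
    exact odd_card_inter_Ico_of_mem_isoCover hM ha hγ (by omega) hn0 hu

theorem le_sum_bondBlock {J : ℕ → ℝ} (hJ : ∀ n : ℕ, 1 ≤ n → 0 ≤ J n) {M a : ℝ}
    {γ : Finset ℤ} {i : ℤ ⊕ (Σ _ : ℕ, ℤ)} (hi : i ∈ bondBlockIndex M a γ) :
    ENNReal.ofReal (min (J 1) (DJ J)) ≤ ∑ p ∈ bondBlock γ i, bondEnergy J p := by
  rcases i with k | ⟨n, u⟩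
  · rw [bondBlock, sum_orientedPairs, singleton_product_singleton, sum_singleton, bondEnergy]
    simp only [sub_add_cancel_left, Int.natAbs_neg, Int.natAbs_one]
    exact ENNReal.ofReal_le_ofReal (min_le_left (J 1) (DJ J))
  · have hn := n_ne_zero_of_mem_bondBlockIndex hi
    rw [bondBlock, sum_orientedPairs]
    calc ENNReal.ofReal (min (J 1) (DJ J)) ≤ ENNReal.ofReal (Dn J n) :=
          ENNReal.ofReal_le_ofReal ((min_le_right _ _).trans (DJ_le_Dn hJ hn))
      _ ≤ _ := by
          rw [Dn_eq_sum_leftBlock_rightBlock J hn u]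
          exact le_sum_of_subadditive _ ENNReal.ofReal_zero.le
            (fun _ _ => ENNReal.ofReal_add_le) _ _

theorem disjoint_bondBlock_inr {M a : ℝ} (hM : 1 ≤ M) (ha : 1 ≤ a) {γ : Finset ℤ} {n : ℕ}
    (hn : n ≠ 0) {u u' : ℤ} (hu : u ∈ isoCover M a n γ) (hu' : u' ∈ isoCover M a n γ)
    (hlt : u < u') : Disjoint (bondBlock γ (.inr ⟨n, u⟩)) (bondBlock γ (.inr ⟨n, u'⟩)) := by
  rw [disjoint_left]
  intro p hp hp'
  have h2 := two_pow_eq_two_mul_two_pow_pred hn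
  have h2' : (2 : ℤ) ^ (n + 1) = 2 * 2 ^ n := pow_succ' 2 n
  have := two_pow_succ_lt_sub_of_mem_isoCover hM ha hu hu' hlt
  replace hp := mem_orientedPairs hp
  replace hp' := mem_orientedPairs hp'
  simp only [leftBlock, rightBlock, mem_Icc] at hp hp'
  omega

theorem pairwiseDisjoint_bondBlock {M a : ℝ} (hM : 1 ≤ M) (ha : 1 ≤ a) (γ : Finset ℤ) :
    (bondBlockIndex M a γ : Set (ℤ ⊕ (Σ _ : ℕ, ℤ))).PairwiseDisjoint (bondBlock γ) := by
  intro i hi j hj hij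
  rcases i with k | ⟨n, u⟩ <;> rcases j with k' | ⟨n', u'⟩
  · rw [Function.onFun, disjoint_left]
    intro p hpi hpj
    rcases mem_bondBlock_inl hpi with rfl | rfl <;>
      rcases mem_bondBlock_inl hpj with h | h <;>
      simp only [Prod.ext_iff] at h <;> exact hij (congrArg _ (by omega))
  · rw [Function.onFun, disjoint_left]
    intro p hpi hpj
    have hn := n_ne_zero_of_mem_bondBlockIndex hj
    have := log_natAbs_of_mem_bondBlock_inr hn hpj
    rcases mem_bondBlock_inl hpi with rfl | rfl <;>
      simp only [sub_add_cancel_left, add_sub_cancel_left, Int.natAbs_neg, Int.natAbs_one,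
        Nat.log_one_right] at this <;> omega
  · rw [Function.onFun, disjoint_right]
    intro p hpj hpi
    have hn := n_ne_zero_of_mem_bondBlockIndex hi
    have := log_natAbs_of_mem_bondBlock_inr hn hpi
    rcases mem_bondBlock_inl hpj with rfl | rfl <;>
      simp only [sub_add_cancel_left, add_sub_cancel_left, Int.natAbs_neg, Int.natAbs_one,
        Nat.log_one_right] at this <;> omega
  · have hn := n_ne_zero_of_mem_bondBlockIndex hi
    obtain rfl | hnn := eq_or_ne n n'
    · have hu := (mem_inr_bondBlockIndex.1 hi).2
      have hu' := (mem_inr_bondBlockIndex.1 hj).2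
      rcases lt_or_gt_of_ne fun h : u = u' => hij (h ▸ rfl) with h | h
      · exact disjoint_bondBlock_inr hM ha hn hu hu' h
      · exact (disjoint_bondBlock_inr hM ha hn hu' hu h).symm
    · rw [Function.onFun, disjoint_left]
      intro p hpi hpj
      exact hnn ((log_natAbs_of_mem_bondBlock_inr hn hpi).symm.trans
        (log_natAbs_of_mem_bondBlock_inr (n_ne_zero_of_mem_bondBlockIndex hj) hpj))

theorem energy_ge_isoCoverSize_general (J : ℕ → ℝ) (hpos : ∀ n : ℕ, 1 ≤ n → 0 < J n)
    (M a : ℝ) (hM : 1 < M) (ha1 : 1 < a)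
    (γ : Finset ℤ) (hγ : IsContour M a γ) :
    ENNReal.ofReal (2 * min (J 1) (DJ J)) * (isoCoverSize M a γ : ℝ≥0∞)
      ≤ energyE J γ := by
  have hJ : ∀ n : ℕ, 1 ≤ n → 0 ≤ J n := fun n hn => (hpos n hn).le
  set s := bondBlockIndex M a γ
  calc ENNReal.ofReal (2 * min (J 1) (DJ J)) * (isoCoverSize M a γ : ℝ≥0∞)
      = 2 * ∑ _i ∈ s, ENNReal.ofReal (min (J 1) (DJ J)) := by
        rw [sum_const, nsmul_eq_mul, card_bondBlockIndex, ENNReal.ofReal_mul zero_le_two,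
          ENNReal.ofReal_ofNat]
        ring
    _ ≤ 2 * ∑ i ∈ s, ∑ p ∈ bondBlock γ i, bondEnergy J p := by
        gcongr with i hi
        exact le_sum_bondBlock hJ hi
    _ = 2 * ∑ p ∈ s.biUnion (bondBlock γ), bondEnergy J p := by
        rw [sum_biUnion (pairwiseDisjoint_bondBlock hM.le ha1.le γ)]
    _ ≤ energyE J γ := two_mul_sum_bondEnergy_le_energyE J fun p hp => by
        obtain ⟨i, hi, hp⟩ := mem_biUnion.1 hp
        exact mem_Iminus_of_mem_bondBlock hM.le ha1.le hγ hi hp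

/-- for a nonincreasing positive coupling `J`, the energy of an
`(M,a)`-irreducible contour dominates the isolated cover size:
`H_J(γ) ≥ 2·min{J(1), D(J)}·𝒩'(γ)`. -/
theorem energy_ge_isoCoverSize (J : ℕ → ℝ) (hpos : ∀ n : ℕ, 1 ≤ n → 0 < J n)
    (hmono : ∀ m n : ℕ, 1 ≤ m → m ≤ n → J n ≤ J m)
    (M a : ℝ) (hM : 1 < M) (ha1 : 1 < a) (ha2 : a < 2)
    (γ : Finset ℤ) (hγ : IsContour M a γ) :
    ENNReal.ofReal (2 * min (J 1) (DJ J)) * (isoCoverSize M a γ : ℝ≥0∞)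
      ≤ energyE J γ :=
  energy_ge_isoCoverSize_general J hpos M a hM ha1 γ hγ
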